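/- Let X = ℓ²(ℕ) (so X* = X), let B: ℓ² → ℓ² be the diagonal operator (ξ_k)_{k∈ℕ} ↦ (ξ_k/k)_{k∈ℕ}, and let A = B⁻¹. Then: (i) ran B = dom A is dense in ℓ² but not closed; (ii) the point x = (k^{−4/3})_{k∈ℕ} lies in ℓ² ∖ ran B, and its truncations xₙ = (1^{−4/3}, …, n^{−4/3}, 0, 0, …) lie in ran B, converge to x, and satisfy ⟨xₙ, Axₙ⟩ = Σ_{k=1}^{n} k^{−5/3} → ζ(5/3) ∈ ℝ; consequently dom A ⊊ dom q_B*; (iii) therefore 𝒜_A ≠ ℬ_A and 𝒜_A is not lower semicontinuous, so 𝒜_A is a representer for A that is not autoconjugate. -/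

import Mathlib

noncomputable section
open scoped Classical RealInnerProductSpace
open Filter Topology

/-- The real Hilbert space `ℓ²(ℕ)`. -/
abbrev ellTwo : Type := lp (fun _ : ℕ => ℝ) 2

namespace Stmt19

variable (B : ellTwo →L[ℝ] ellTwo)

/-- The inverse `A = B⁻¹ : ℓ² ⇉ ℓ²`, with graph `{(Bu, u) : u ∈ ℓ²}`. -/
def invOp : ellTwo → Set ellTwo := fun x => {u | B u = x}

/-- `q_B(u) = ½⟨Bu,u⟩`. -/
def qB : ellTwo → ℝ := fun u => 1 / 2 * ⟪B u, u⟫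

/-- `q_B*(x) = sup_u (⟨x,u⟩ - q_B(u))`. -/
def qBstar : ellTwo → EReal := fun x => ⨆ u : ellTwo, ((⟪x, u⟫ - qB B u : ℝ) : EReal)

/-- The Fitzpatrick function of `A = B⁻¹`:
`F_A(x,x*) = sup_u (⟨x,u⟫ + ⟨Bu,x*⟩ - ⟨Bu,u⟩)`. -/
def fitzInv : ellTwo × ellTwo → EReal :=
  fun p => ⨆ u : ellTwo, ((⟪p.1, u⟫ + ⟪B u, p.2⟫ - ⟪B u, u⟫ : ℝ) : EReal)

/-- The Fenchel conjugate of `F : ℓ² × ℓ² → (-∞,+∞]` (dual variable first):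
`F*(x*,x) = sup_{(y,y*)} (⟨y,x*⟩ + ⟨x,y*⟩ - F(y,y*))`. -/
def hconj2 (F : ellTwo × ellTwo → EReal) : ellTwo × ellTwo → EReal :=
  fun p => ⨆ q : ellTwo × ellTwo, ((⟪q.1, p.1⟫ + ⟪p.2, q.2⟫ : ℝ) : EReal) - F q

/-- The Penot–Zălinescu function of `A = B⁻¹`. -/
def pzInv : ellTwo × ellTwo → EReal :=
  fun p => ⨅ y' : ellTwo,
    ((1 / 2 : ℝ) : EReal) * fitzInv B (p.1, p.2 + y')
      + ((1 / 2 : ℝ) : EReal) * hconj2 (fitzInv B) (p.2 - y', p.1)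

/-- The proximal-average based function of `A = B⁻¹`. -/
def bwInv : ellTwo × ellTwo → EReal :=
  fun p => ⨅ q : ellTwo × ellTwo,
    ((1 / 2 : ℝ) : EReal) * fitzInv B (p.1 + q.1, p.2 + q.2)
      + ((1 / 2 : ℝ) : EReal) * hconj2 (fitzInv B) (p.2 - q.2, p.1 - q.1)
      + ((1 / 2 * ‖q.1‖ ^ 2 + 1 / 2 * ‖q.2‖ ^ 2 : ℝ) : EReal)

/-- `F` is autoconjugate. -/
def Autoconjugate (F : ellTwo × ellTwo → EReal) : Prop :=
  ∀ x x' : ellTwo, hconj2 F (x', x) = F (x, x')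

/-- `F` is a representer for `A : ℓ² ⇉ ℓ²`. -/
def IsRepresenter (F : ellTwo × ellTwo → EReal) (A : ellTwo → Set ellTwo) : Prop :=
  ∀ x x' : ellTwo, x' ∈ A x ↔ F (x, x') = ((⟪x, x'⟫ : ℝ) : EReal)

/-!
For a positive injective `B`, the Fitzpatrick function of `A = B⁻¹` is explicit on the range:
`F_A(Bw, z) = ¼⟨B(w + z), w + z⟩`, and `F_A*` is finite only on `gra A`, where
`F_A*(v, Bv) = ⟨Bv, v⟩`. Hence `𝒜_A(Bu, x') = ½⟨Bx', x'⟩ + ½⟨Bu, u⟩` and `𝒜_A = +∞` off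
`ran B × ℓ²`, which makes `𝒜_A` a representer of `A`. A point `x ∉ ran B` with `q_B*(x) < ∞`
then breaks the rest: `𝒜_A(x, 0) = +∞`, whereas `ℬ_A(x, 0) ≤ ½F_A(2x, 0) + ½‖x‖²` and
`𝒜_A*(0, x) ≤ q_B*(x)` are finite, and approximating `x` by `Buₙ` with bounded `⟨Buₙ, uₙ⟩` shows
that `𝒜_A` is not lower semicontinuous at `(x, 0)`.

For `B = diag(1/k)` and `x = (k^{-4/3})`, the preimage `(k^{-1/3})` is not square-summable, while
coordinatewise AM-GM gives `q_B*(x) ≤ ½ ∑ k x_k² = ½ ζ(5/3)`; the truncations of `x` have energies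
the partial sums of `ζ(5/3)`. Coordinates are indexed from `0`, so the paper's `k` is `k + 1` here.
-/

section PositiveOperator

variable {E : Type*} [NormedAddCommGroup E] [InnerProductSpace ℝ E] {T : E →L[ℝ] E}

lemma inner_map_swap (hT : T.IsPositive) (u v : E) : ⟪T u, v⟫ = ⟪T v, u⟫ := by
  rw [hT.inner_left_eq_inner_right, real_inner_comm]

lemma two_mul_inner_map_le (hT : T.IsPositive) (u v : E) :
    2 * ⟪T u, v⟫ ≤ ⟪T u, u⟫ + ⟪T v, v⟫ := by
  have h := hT.inner_nonneg_left (u - v)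
  simp only [map_sub, inner_sub_left, inner_sub_right, inner_map_swap hT v u] at h
  linarith

lemma map_eq_zero_of_inner_map_self_eq_zero (hT : T.IsPositive) {w : E}
    (hw : ⟪T w, w⟫ = 0) : T w = 0 := by
  have key : ∀ t : ℝ, t * (2 * ⟪T w, T w⟫) ≤ ⟪T (T w), T w⟫ := fun t => by
    simpa [map_smul, inner_smul_left, inner_smul_right, hw, mul_left_comm]
      using two_mul_inner_map_le hT (t • w) (T w)
  rw [← inner_self_eq_zero (𝕜 := ℝ)]
  by_contra hne
  have h := key ((⟪T (T w), T w⟫ + 1) / (2 * ⟪T w, T w⟫))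
  rw [div_mul_cancel₀ _ (by simpa using hne)] at h
  linarith

end PositiveOperator

section InverseOfPositive

variable {B}

lemma le_fitzInv (p : ellTwo × ellTwo) (u : ellTwo) :
    ((⟪p.1, u⟫ + ⟪B u, p.2⟫ - ⟪B u, u⟫ : ℝ) : EReal) ≤ fitzInv B p :=
  le_iSup (fun u : ellTwo => ((⟪p.1, u⟫ + ⟪B u, p.2⟫ - ⟪B u, u⟫ : ℝ) : EReal)) u

lemma fitzInv_nonneg (p : ellTwo × ellTwo) : 0 ≤ fitzInv B p := by
  simpa using le_fitzInv (B := B) p 0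

lemma fitzInv_map (hpos : B.IsPositive) (w z : ellTwo) :
    fitzInv B (B w, z) = ((4⁻¹ * ⟪B (w + z), w + z⟫ : ℝ) : EReal) := by
  have hsym := inner_map_swap hpos
  refine le_antisymm (iSup_le fun u => EReal.coe_le_coe_iff.2 ?_) ?_
  · have h := two_mul_inner_map_le hpos ((2 : ℝ) • u) (w + z)
    simp only [map_smul, map_add, inner_smul_left, inner_smul_right, inner_add_left,
      inner_add_right, RCLike.conj_to_real] at h ⊢
    linarith [hsym w u, hsym z w]
  · -- the supremum is attained at `u = (w + z) / 2`
    refine le_trans (le_of_eq ?_) (le_fitzInv _ ((2⁻¹ : ℝ) • (w + z)))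
    simp only [map_smul, map_add, inner_smul_left, inner_smul_right, inner_add_left,
      inner_add_right, RCLike.conj_to_real, hsym z w]
    rw [EReal.coe_eq_coe_iff]
    ring

lemma hconj2_fitzInv_eq_top (hpos : B.IsPositive) {x x' : ellTwo} (h : x ≠ B x') :
    hconj2 (fitzInv B) (x', x) = ⊤ := by
  set z := x - B x'
  have hz : 0 < ⟪z, z⟫ := real_inner_self_pos.2 (sub_ne_zero.2 h)
  refine (EReal.eq_top_iff_forall_lt _).2 fun y => ?_
  set t := (y + 1) / ⟪z, z⟫
  -- along the line `(B (-t • z), t • z)` the Fitzpatrick function vanishes while the pairing grows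
  have hF : fitzInv B (B (-t • z), t • z) = 0 := by rw [fitzInv_map hpos]; simp
  have hpair : ⟪B (-t • z), x'⟫ + ⟪x, t • z⟫ = y + 1 := by
    have hzz : ⟪z, z⟫ = ⟪x, z⟫ - ⟪B z, x'⟫ := by
      rw [hpos.inner_left_eq_inner_right, real_inner_comm z x, ← inner_sub_right]
    simp only [map_smul, map_neg, inner_smul_left, inner_smul_right, RCLike.conj_to_real]
    calc -t * ⟪B z, x'⟫ + t * ⟪x, z⟫ = t * ⟪z, z⟫ := by rw [hzz]; ring
      _ = y + 1 := div_mul_cancel₀ _ hz.ne'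
  refine lt_of_lt_of_le ?_ (le_iSup (fun q : ellTwo × ellTwo =>
    ((⟪q.1, x'⟫ + ⟪x, q.2⟫ : ℝ) : EReal) - fitzInv B q) (B (-t • z), t • z))
  simp only [hpair, hF, sub_zero]
  exact_mod_cast lt_add_one y

lemma hconj2_fitzInv_map (hpos : B.IsPositive) (v : ellTwo) :
    hconj2 (fitzInv B) (v, B v) = ((⟪B v, v⟫ : ℝ) : EReal) := by
  refine le_antisymm (iSup_le fun q => EReal.sub_le_of_le_add ?_) ?_
  · calc ((⟪q.1, v⟫ + ⟪B v, q.2⟫ : ℝ) : EReal)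
        = ((⟪B v, v⟫ : ℝ) : EReal) + ((⟪q.1, v⟫ + ⟪B v, q.2⟫ - ⟪B v, v⟫ : ℝ) : EReal) := by
          rw [← EReal.coe_add]; ring_nf
      _ ≤ _ := add_le_add_right (le_fitzInv q v) _
  · refine le_trans (le_of_eq ?_) (le_iSup (fun q : ellTwo × ellTwo =>
      ((⟪q.1, v⟫ + ⟪B v, q.2⟫ : ℝ) : EReal) - fitzInv B q) (B v, v))
    simp only [fitzInv_map hpos, map_add, inner_add_left, inner_add_right]
    rw [← EReal.coe_sub, EReal.coe_eq_coe_iff]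
    ring

lemma pzInv_eq_top (hpos : B.IsPositive) {x : ellTwo} (hx : x ∉ Set.range B) (x' : ellTwo) :
    pzInv B (x, x') = ⊤ := by
  refine eq_top_iff.2 (le_iInf fun y' => ?_)
  have hhalf : ((1 / 2 : ℝ) : EReal) * fitzInv B (x, x' + y') ≠ ⊥ :=
    ne_bot_of_le_ne_bot EReal.zero_ne_bot
      (EReal.mul_nonneg (by norm_num) (fitzInv_nonneg _))
  rw [hconj2_fitzInv_eq_top hpos fun h => hx ⟨_, h.symm⟩,
    EReal.coe_mul_top_of_pos (by norm_num), EReal.add_top_of_ne_bot hhalf]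

lemma pzInv_summand_of_sub_eq (hpos : B.IsPositive) {u x' y' : ellTwo} (hy : x' - y' = u) :
    ((1 / 2 : ℝ) : EReal) * fitzInv B (B u, x' + y')
      + ((1 / 2 : ℝ) : EReal) * hconj2 (fitzInv B) (x' - y', B u)
      = ((1 / 2 * ⟪B x', x'⟫ + 1 / 2 * ⟪B u, u⟫ : ℝ) : EReal) := by
  subst hy
  have hsum : x' - y' + (x' + y') = (2 : ℝ) • x' := by rw [two_smul]; abel
  rw [fitzInv_map hpos, hconj2_fitzInv_map hpos, hsum, ← EReal.coe_mul, ← EReal.coe_mul,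
    ← EReal.coe_add, EReal.coe_eq_coe_iff]
  simp only [map_smul, inner_smul_left, inner_smul_right, RCLike.conj_to_real]
  ring

lemma pzInv_map_le (hpos : B.IsPositive) (u x' : ellTwo) :
    pzInv B (B u, x') ≤ ((1 / 2 * ⟪B x', x'⟫ + 1 / 2 * ⟪B u, u⟫ : ℝ) : EReal) :=
  iInf_le_of_le (x' - u) (pzInv_summand_of_sub_eq hpos (sub_sub_cancel x' u)).le

lemma pzInv_map (hpos : B.IsPositive) (hinj : Function.Injective B) (u x' : ellTwo) :
    pzInv B (B u, x') = ((1 / 2 * ⟪B x', x'⟫ + 1 / 2 * ⟪B u, u⟫ : ℝ) : EReal) := by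
  refine le_antisymm (pzInv_map_le hpos u x') (le_iInf fun y' => ?_)
  by_cases hy : x' - y' = u
  · exact (pzInv_summand_of_sub_eq hpos hy).ge
  · rw [hconj2_fitzInv_eq_top hpos fun h => hy (hinj h).symm, fitzInv_map hpos,
      EReal.coe_mul_top_of_pos (by norm_num), ← EReal.coe_mul, EReal.coe_add_top]
    exact le_top

lemma isRepresenter_pzInv (hpos : B.IsPositive) (hinj : Function.Injective B) :
    IsRepresenter (pzInv B) (invOp B) := by
  intro x x'
  by_cases hx : x ∈ Set.range B
  · obtain ⟨u, rfl⟩ := hx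
    rw [pzInv_map hpos hinj, EReal.coe_eq_coe_iff]
    refine ⟨fun h => by rw [hinj h]; ring, fun h => ?_⟩
    have hzero : ⟪B (x' - u), x' - u⟫ = 0 := by
      simp only [map_sub, inner_sub_left, inner_sub_right]
      linarith [inner_map_swap hpos u x', hpos.inner_left_eq_inner_right u x']
    have := hinj ((map_eq_zero_of_inner_map_self_eq_zero hpos hzero).trans B.map_zero.symm)
    exact congrArg B (sub_eq_zero.1 this)
  · rw [pzInv_eq_top hpos hx]
    exact iff_of_false (fun h => hx ⟨x', h⟩) (EReal.coe_ne_top _).symm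

lemma qBstar_ne_top {x : ellTwo} {C : ℝ} (hC : ∀ v, ⟪x, v⟫ - qB B v ≤ C) : qBstar B x ≠ ⊤ :=
  ne_top_of_le_ne_top (EReal.coe_ne_top C) (iSup_le fun v => EReal.coe_le_coe_iff.2 (hC v))

lemma inner_map_sub_qB_le (hpos : B.IsPositive) (w v : ellTwo) : ⟪B w, v⟫ - qB B v ≤ qB B w := by
  have := two_mul_inner_map_le hpos w v
  simp only [qB]
  linarith

lemma bwInv_ne_top (hpos : B.IsPositive) {x : ellTwo} {C : ℝ} (hC : ∀ v, ⟪x, v⟫ - qB B v ≤ C) :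
    bwInv B (x, 0) ≠ ⊤ := by
  have hF : fitzInv B (x + x, 0 + 0) ≤ ((2 * C : ℝ) : EReal) := by
    refine iSup_le fun u => EReal.coe_le_coe_iff.2 ?_
    have := hC u
    simp only [qB, add_zero, inner_zero_right, inner_add_left] at this ⊢
    linarith
  have hconj : hconj2 (fitzInv B) (0 - 0, x - x) = ((0 : ℝ) : EReal) := by
    simpa using hconj2_fitzInv_map hpos 0
  refine ne_top_of_le_ne_top (EReal.coe_ne_top
    (1 / 2 * (2 * C) + 1 / 2 * 0 + (1 / 2 * ‖x‖ ^ 2 + 1 / 2 * ‖(0 : ellTwo)‖ ^ 2)))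
    (iInf_le_of_le (x, 0) ?_)
  rw [hconj]
  push_cast at hF ⊢
  gcongr

lemma range_ssubset_dom_qBstar (hpos : B.IsPositive) {x : ellTwo} (hx : x ∉ Set.range B)
    {C : ℝ} (hC : ∀ v, ⟪x, v⟫ - qB B v ≤ C) : Set.range B ⊂ {y : ellTwo | qBstar B y ≠ ⊤} :=
  ⟨fun _ ⟨w, hw⟩ => hw ▸ qBstar_ne_top (inner_map_sub_qB_le hpos w),
    fun h => hx (h (qBstar_ne_top hC))⟩

lemma pzInv_ne_bwInv (hpos : B.IsPositive) {x : ellTwo} (hx : x ∉ Set.range B) {C : ℝ}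
    (hC : ∀ v, ⟪x, v⟫ - qB B v ≤ C) : pzInv B ≠ bwInv B :=
  fun h => bwInv_ne_top hpos hC (h ▸ pzInv_eq_top hpos hx 0)

lemma not_lowerSemicontinuous_pzInv (hpos : B.IsPositive) {x : ellTwo} (hx : x ∉ Set.range B)
    {u : ℕ → ellTwo} {C : ℝ} (hu : Tendsto (fun n => B (u n)) atTop (𝓝 x))
    (hC : ∀ n, ⟪B (u n), u n⟫ ≤ C) : ¬ LowerSemicontinuous (pzInv B) := by
  intro hlsc
  have hev := hlsc (x, 0) ((1 / 2 * C : ℝ) : EReal)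
    (by simp only [gt_iff_lt, pzInv_eq_top hpos hx]; exact EReal.coe_lt_top _)
  obtain ⟨n, hn⟩ := ((hu.prodMk_nhds tendsto_const_nhds).eventually hev).exists
  have hle := pzInv_map_le hpos (u n) 0
  simp only [map_zero, inner_zero_right, mul_zero, zero_add] at hle
  exact (hn.trans_le hle).not_ge (EReal.coe_le_coe_iff.2 (by linarith [hC n]))

lemma not_autoconjugate_pzInv (hpos : B.IsPositive) (hinj : Function.Injective B) {x : ellTwo}
    (hx : x ∉ Set.range B) {C : ℝ} (hC : ∀ v, ⟪x, v⟫ - qB B v ≤ C) :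
    ¬ Autoconjugate (pzInv B) := by
  intro h
  have hle : hconj2 (pzInv B) (0, x) ≤ (C : EReal) := by
    refine iSup_le fun ⟨y, y'⟩ => EReal.sub_le_of_le_add ?_
    by_cases hy : y ∈ Set.range B
    · obtain ⟨u, rfl⟩ := hy
      rw [pzInv_map hpos hinj, ← EReal.coe_add, EReal.coe_le_coe_iff]
      have := hC y'
      simp only [qB] at this
      linarith [hpos.inner_nonneg_left u, inner_zero_right (𝕜 := ℝ) (B u)]
    · rw [pzInv_eq_top hpos hy, EReal.coe_add_top]
      exact le_top
  rw [h x 0, pzInv_eq_top hpos hx] at hle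
  exact EReal.coe_ne_top C (top_le_iff.1 hle)

end InverseOfPositive

lemma summable_succ_rpow_iff {p : ℝ} : Summable (fun k : ℕ => ((k : ℝ) + 1) ^ p) ↔ p < -1 := by
  simpa using summable_nat_add_iff (f := fun n : ℕ => (n : ℝ) ^ p) 1 |>.trans Real.summable_nat_rpow

lemma memℓp_two_succ_rpow_iff {p : ℝ} :
    Memℓp (fun k : ℕ => ((k : ℝ) + 1) ^ p) 2 ↔ p < -(1 / 2) := by
  rw [memℓp_gen_iff (by norm_num)]
  have h : ∀ k : ℕ, ‖((k : ℝ) + 1) ^ p‖ ^ (ENNReal.toReal 2) = ((k : ℝ) + 1) ^ (p * 2) :=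
    fun k => by
      rw [Real.norm_of_nonneg (by positivity), ← Real.rpow_mul (by positivity),
        ENNReal.toReal_ofNat]
  simp only [h, summable_succ_rpow_iff]
  constructor <;> intro <;> linarith

lemma succ_mul_sq_eq_rpow {x : ℕ → ℝ} {p : ℝ} (hx : ∀ k, x k = ((k : ℝ) + 1) ^ p) :
    (fun k : ℕ => ((k : ℝ) + 1) * x k ^ 2) = fun k : ℕ => ((k : ℝ) + 1) ^ (p * 2 + 1) :=
  funext fun k => by
    rw [hx, Real.rpow_add_one (by positivity), Real.rpow_mul (by positivity), Real.rpow_two,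
      mul_comm]

lemma inner_eq_tsum_mul (f g : ellTwo) : ⟪f, g⟫ = ∑' k, f k * g k := by
  rw [lp.inner_eq_tsum]
  simp only [RCLike.inner_apply, conj_trivial]
  exact tsum_congr fun k => mul_comm _ _

lemma summable_mul (f g : ellTwo) : Summable fun k => f k * g k :=
  (lp.summable_inner (𝕜 := ℝ) f g).congr fun k => by rw [RCLike.inner_apply, conj_trivial, mul_comm]

def truncate (x : ellTwo) (n : ℕ) : ellTwo := ∑ i ∈ Finset.range n, lp.single 2 i (x i)

lemma truncate_apply (x : ellTwo) (n k : ℕ) : truncate x n k = if k < n then x k else 0 := by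
  rw [truncate, lp.coeFn_sum, Finset.sum_apply]
  simp [lp.single_apply, Pi.single_apply]

lemma tendsto_truncate (x : ellTwo) : Tendsto (truncate x) atTop (𝓝 x) :=
  have : Fact ((1 : ENNReal) ≤ 2) := ⟨one_le_two⟩
  (lp.hasSum_single ENNReal.ofNat_ne_top x).tendsto_sum_nat

section Diagonal

variable {B} (hB : ∀ (u : ellTwo) (k : ℕ), B u k = u k / (k + 1))
include hB

lemma apply_eq_of_map_eq {u x : ellTwo} (h : B u = x) (k : ℕ) : u k = (k + 1) * x k := by
  rw [← h, hB, mul_div_cancel₀ _ (by positivity : ((k : ℝ) + 1) ≠ 0)]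

lemma inner_map_eq_tsum (u v : ellTwo) : ⟪B u, v⟫ = ∑' k, u k * v k / (k + 1) := by
  simp only [inner_eq_tsum_mul, hB, div_mul_eq_mul_div]

lemma isPositive_of_diag : B.IsPositive := by
  refine (B.isPositive_iff).2 ⟨fun u v => ?_, fun u => ?_⟩
  · simp only [ContinuousLinearMap.coe_coe, inner_map_eq_tsum hB, inner_eq_tsum_mul, hB]
    exact tsum_congr fun k => by ring
  · rw [inner_map_eq_tsum hB]
    exact tsum_nonneg fun k => div_nonneg (mul_self_nonneg _) (by positivity)

lemma injective_of_diag : Function.Injective B := fun u v h =>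
  lp.ext (funext fun k => by
    rw [apply_eq_of_map_eq hB h k]; exact (apply_eq_of_map_eq hB rfl k).symm)

lemma mem_range_iff_memℓp {x : ellTwo} :
    x ∈ Set.range B ↔ Memℓp (fun k : ℕ => ((k : ℝ) + 1) * x k) 2 := by
  refine ⟨fun ⟨u, hu⟩ => funext (apply_eq_of_map_eq hB hu) ▸ u.2, fun h => ⟨⟨_, h⟩, ?_⟩⟩
  ext k
  simp [hB, mul_div_cancel_left₀ _ (by positivity : ((k : ℝ) + 1) ≠ 0)]

lemma truncate_mem_range (x : ellTwo) (n : ℕ) : truncate x n ∈ Set.range B := by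
  refine (mem_range_iff_memℓp hB).2
    ((memℓp_zero ((Set.finite_Iio n).subset fun k hk => ?_)).of_exponent_ge (by norm_num))
  simp only [Set.mem_ofPred_eq, truncate_apply, mul_ite, mul_zero, ite_ne_right_iff] at hk
  exact hk.1

lemma dense_range_of_diag : Dense (Set.range B) := fun x =>
  mem_closure_of_tendsto (tendsto_truncate x) (Eventually.of_forall (truncate_mem_range hB x))

lemma inner_eq_tsum_of_map_eq {u x : ellTwo} (h : B u = x) :
    ⟪x, u⟫ = ∑' k : ℕ, ((k : ℝ) + 1) * x k ^ 2 := by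
  rw [inner_eq_tsum_mul]
  exact tsum_congr fun k => by rw [apply_eq_of_map_eq hB h]; ring

lemma inner_truncate_of_map_eq {u x : ellTwo} {n : ℕ} (h : B u = truncate x n) :
    ⟪truncate x n, u⟫ = ∑ k ∈ Finset.range n, ((k : ℝ) + 1) * x k ^ 2 := by
  rw [inner_eq_tsum_of_map_eq hB h, tsum_eq_sum (s := Finset.range n) fun k hk => by
    simp [truncate_apply, Finset.mem_range.not.1 hk]]
  exact Finset.sum_congr rfl fun k hk => by rw [truncate_apply, if_pos (Finset.mem_range.1 hk)]

lemma inner_sub_qB_le {x : ellTwo} (hx : Summable fun k : ℕ => ((k : ℝ) + 1) * x k ^ 2)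
    (v : ellTwo) : ⟪x, v⟫ - qB B v ≤ 1 / 2 * ∑' k : ℕ, ((k : ℝ) + 1) * x k ^ 2 := by
  have hv : Summable fun k : ℕ => v k * v k / ((k : ℝ) + 1) := by
    simpa only [hB, div_mul_eq_mul_div] using summable_mul (B v) v
  -- coordinatewise AM-GM: `x v ≤ v² / (2(k+1)) + (k+1) x² / 2`
  have hpt : ∀ k : ℕ, x k * v k ≤ 1 / 2 * (v k * v k / (k + 1)) + 1 / 2 * ((k + 1) * x k ^ 2) :=
    fun k => by
      have hk : (0 : ℝ) < k + 1 := by positivity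
      rw [← sub_nonneg]
      have : 0 ≤ (v k - (k + 1) * x k) ^ 2 / (2 * (k + 1)) := by positivity
      convert this using 1
      field_simp
      ring
  have hle := (summable_mul x v).tsum_le_tsum hpt ((hv.mul_left _).add (hx.mul_left _))
  rw [(hv.mul_left _).tsum_add (hx.mul_left _), tsum_mul_left, tsum_mul_left] at hle
  rw [qB, inner_map_eq_tsum hB, inner_eq_tsum_mul]
  linarith

lemma mem_range_iff_of_apply_eq_rpow {x : ellTwo} {p : ℝ} (hx : ∀ k : ℕ, x k = ((k : ℝ) + 1) ^ p) :
    x ∈ Set.range B ↔ p < -(3 / 2) := by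
  have h : (fun k : ℕ => ((k : ℝ) + 1) * x k) = fun k : ℕ => ((k : ℝ) + 1) ^ (p + 1) :=
    funext fun k => by rw [hx, Real.rpow_add_one (by positivity), mul_comm]
  rw [mem_range_iff_memℓp hB, h, memℓp_two_succ_rpow_iff]
  constructor <;> intro <;> linarith

end Diagonal

/-- Example 6.5. Let `B : ℓ² → ℓ²` be the diagonal operator
`(ξ_k) ↦ (ξ_k/k)` and `A = B⁻¹`. Then `ran B = dom A` is dense but not closed; the point
`x = (k^{-4/3})` lies outside `ran B` while its truncations `xₙ` lie in `ran B`, converge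
to `x`, and `⟨xₙ,Axₙ⟩ = Σ_{k≤n} k^{-5/3} → ζ(5/3)`, so `dom A ⊊ dom q_B*`; consequently
`𝒜_A ≠ ℬ_A`, `𝒜_A` is not lower semicontinuous, and `𝒜_A` is a representer for `A`
that is not autoconjugate. -/
theorem stmt19 (hB : ∀ (u : ellTwo) (k : ℕ), B u k = u k / (k + 1)) :
    (Dense (Set.range B : Set ellTwo) ∧ ¬ IsClosed (Set.range B : Set ellTwo)) ∧
    (∀ x : ellTwo, (∀ k : ℕ, x k = ((k : ℝ) + 1) ^ (-(4 / 3) : ℝ)) →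
      x ∉ Set.range B ∧
      ∀ xs : ℕ → ellTwo,
        (∀ n k : ℕ, xs n k = if k < n then ((k : ℝ) + 1) ^ (-(4 / 3) : ℝ) else 0) →
        ((∀ n, xs n ∈ Set.range B) ∧
         Tendsto xs atTop (𝓝 x) ∧
         ∀ u : ℕ → ellTwo, (∀ n, B (u n) = xs n) →
           (∀ n, ⟪xs n, u n⟫ = ∑ k ∈ Finset.range n, ((k : ℝ) + 1) ^ (-(5 / 3) : ℝ)) ∧
           Summable (fun k : ℕ => ((k : ℝ) + 1) ^ (-(5 / 3) : ℝ)) ∧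
           Tendsto (fun n => ⟪xs n, u n⟫) atTop
             (𝓝 (∑' k : ℕ, ((k : ℝ) + 1) ^ (-(5 / 3) : ℝ))))) ∧
    Set.range B ⊂ {x : ellTwo | qBstar B x ≠ ⊤} ∧
    pzInv B ≠ bwInv B ∧
    ¬ LowerSemicontinuous (pzInv B) ∧
    IsRepresenter (pzInv B) (invOp B) ∧
    ¬ Autoconjugate (pzInv B) := by
  have hpos := isPositive_of_diag hB
  have hinj := injective_of_diag hB
  set c : ℕ → ℝ := fun k => ((k : ℝ) + 1) ^ (-(5 / 3) : ℝ)
  have hc : Summable c := summable_succ_rpow_iff.2 (by norm_num)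
  have hnot : ∀ x : ellTwo, (∀ k : ℕ, x k = ((k : ℝ) + 1) ^ (-(4 / 3) : ℝ)) →
      x ∉ Set.range B := fun x hx => by
    rw [mem_range_iff_of_apply_eq_rpow hB hx]; norm_num
  have henergy : ∀ x : ellTwo, (∀ k : ℕ, x k = ((k : ℝ) + 1) ^ (-(4 / 3) : ℝ)) →
      (fun k : ℕ => ((k : ℝ) + 1) * x k ^ 2) = c := fun x hx => by
    rw [succ_mul_sq_eq_rpow hx]; norm_num [c]
  obtain ⟨x, hx⟩ : ∃ x : ellTwo, ∀ k : ℕ, x k = ((k : ℝ) + 1) ^ (-(4 / 3) : ℝ) :=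
    ⟨⟨_, memℓp_two_succ_rpow_iff.2 (by norm_num)⟩, fun _ => rfl⟩
  have hxB := hnot x hx
  have hbound := inner_sub_qB_le hB (henergy x hx ▸ hc)
  choose u hu using truncate_mem_range hB x
  refine ⟨⟨dense_range_of_diag hB, fun hcl => hxB (hcl.closure_subset (dense_range_of_diag hB x))⟩,
    fun y hy => ⟨hnot y hy, fun xs hxs => ?_⟩, range_ssubset_dom_qBstar hpos hxB hbound,
    pzInv_ne_bwInv hpos hxB hbound,
    not_lowerSemicontinuous_pzInv hpos hxB (u := u) (C := ∑' k, c k)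
      (by simpa only [hu] using tendsto_truncate x) fun n => ?_,
    isRepresenter_pzInv hpos hinj, not_autoconjugate_pzInv hpos hinj hxB hbound⟩
  · obtain rfl : xs = truncate y :=
      funext fun n => lp.ext (funext fun k => by rw [hxs, truncate_apply, hy])
    refine ⟨truncate_mem_range hB y, tendsto_truncate y, fun v hv => ?_⟩
    have hinner : ∀ n, ⟪truncate y n, v n⟫ = ∑ k ∈ Finset.range n, c k := fun n => by
      rw [inner_truncate_of_map_eq hB (hv n), henergy y hy]
    exact ⟨hinner, hc, by simpa only [hinner] using hc.hasSum.tendsto_sum_nat⟩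
  · rw [hu, inner_truncate_of_map_eq hB (hu n), henergy x hx]
    exact hc.sum_le_tsum _ fun k _ => by positivity

end Stmt19
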